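/- arXiv:1410.7154 — 3 statements merged into one kernel-verified Lean document; each statement's English description precedes it below -/
import Mathlib

section
/- For simple random sampling without replacement of size n from a population of size N, with e_j = (n)_j/(N)_j the ratio of falling factorials, one has E[S_a S_b] = λ(2) s_{a+b} + λ(1²) s_a s_b, where S_r = ∑_{i=1}^n X_i^r, s_r = ∑_{j=1}^N x_j^r, λ(2) = e_1 − e_2, and λ(1²) = e_2. -/
/-!
Expanding the product gives `E[S_a S_b] = ∑_{i,k} E[X_i^a X_k^b]`. Fixing the values of a
sample at one index (or at two distinct indices) leaves an embedding of the remaining indices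
into the remaining units, so the number of such samples is a falling factorial that does not
depend on the fixed values. Hence each `X_i` is uniform on the population and each `(X_i, X_k)`,
`i ≠ k`, is uniform on ordered pairs of distinct units: the `n` diagonal terms contribute
`s_{a+b} / N` and the `(n)_2` off-diagonal ones `(s_a s_b - s_{a+b}) / (N)_2`.
-/

open Finset

/-- Expectation under simple random sampling without replacement: the average of `g`
over all ordered samples of `n` distinct indices (i.e. embeddings `Fin n ↪ Fin N`),
each equally likely. -/
noncomputable def srsExp (N n : ℕ) (g : (Fin n ↪ Fin N) → ℝ) : ℝ :=
  (∑ σ : Fin n ↪ Fin N, g σ) / (Fintype.card (Fin n ↪ Fin N))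

namespace Function.Embedding

variable {α β : Type*} [DecidableEq α] [DecidableEq β]

def subtypeApplyEqEquiv (i : α) (j : β) :
    {σ : α ↪ β // σ i = j} ≃ ({x // x ≠ i} ↪ {y // y ≠ j}) where
  toFun σ := ⟨fun x => ⟨σ.1 x, fun h => x.2 (σ.1.injective (h.trans σ.2.symm))⟩,
    fun x y h => Subtype.ext (σ.1.injective (congrArg Subtype.val h))⟩
  invFun τ := ⟨⟨fun x => if h : x = i then j else τ ⟨x, h⟩, by
      intro x y hxy
      by_cases hx : x = i <;> by_cases hy : y = i <;>
        simp only [hx, hy, dif_pos, dif_neg, not_false_iff] at hxy ⊢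
      · exact absurd hxy.symm (τ ⟨y, hy⟩).2
      · exact absurd hxy (τ ⟨x, hx⟩).2
      · exact Subtype.ext_iff.mp (τ.injective (Subtype.ext hxy))⟩, by simp⟩
  left_inv σ := by
    ext x
    by_cases h : x = i
    · simp [h, σ.2]
    · simp [h]
      rfl
  right_inv τ := by
    ext x
    simp [x.2]

end Function.Embedding

namespace Fintype

variable {α β M : Type*} [DecidableEq α] [DecidableEq β] [Fintype α] [Fintype β]
  [AddCommMonoid M]

theorem card_embedding_subtype_apply_eq (i : α) (j : β) :
    Fintype.card {σ : α ↪ β // σ i = j}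
      = (Fintype.card β - 1).descFactorial (Fintype.card α - 1) := by
  simp [Fintype.card_congr (Function.Embedding.subtypeApplyEqEquiv i j),
    Fintype.card_subtype_compl]

theorem sum_embedding_apply (i : α) (f : β → M) :
    ∑ σ : α ↪ β, f (σ i)
      = (Fintype.card β - 1).descFactorial (Fintype.card α - 1) • ∑ j, f j := by
  rw [← Fintype.sum_fiberwise (fun σ : α ↪ β => σ i), smul_sum]
  refine Finset.sum_congr rfl fun j _ => ?_
  rw [← card_embedding_subtype_apply_eq i j, ← card_univ, ← sum_const]
  exact Finset.sum_congr rfl fun σ _ => congrArg f σ.2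

theorem sum_embedding_apply_apply {i k : α} (hik : i ≠ k) (g : β → β → M) :
    ∑ σ : α ↪ β, g (σ i) (σ k)
      = (Fintype.card β - 2).descFactorial (Fintype.card α - 2)
          • ∑ j, ∑ l ∈ univ.erase j, g j l := by
  rw [← Fintype.sum_fiberwise (fun σ : α ↪ β => σ i), smul_sum]
  refine Finset.sum_congr rfl fun j _ => ?_
  calc ∑ σ : {σ : α ↪ β // σ i = j}, g (σ.1 i) (σ.1 k)
      = ∑ τ : {x // x ≠ i} ↪ {y // y ≠ j}, g j (τ ⟨k, hik.symm⟩) := by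
        rw [← (Function.Embedding.subtypeApplyEqEquiv i j).sum_comp]
        exact Finset.sum_congr rfl fun σ _ => by rw [σ.2]; rfl
    _ = _ := by
        convert sum_embedding_apply (⟨k, hik.symm⟩ : {x // x ≠ i})
          (fun l : {l // l ≠ j} => g j l) using 1
        rw [sum_subtype (p := (· ≠ j)) (F := inferInstance) (univ.erase j) (by simp) (g j)]
        simp [Fintype.card_subtype_compl, Nat.sub_sub]

end Fintype

section srsExp

variable {N n : ℕ}

theorem srsExp_sum {ι : Type*} (s : Finset ι) (g : ι → (Fin n ↪ Fin N) → ℝ) :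
    srsExp N n (fun σ => ∑ i ∈ s, g i σ) = ∑ i ∈ s, srsExp N n (g i) := by
  simp only [srsExp, ← sum_div]
  exact congrArg (· / _) sum_comm

theorem nsmul_div_descFactorial {K : Type*} [Field K] [CharZero K] {m : ℕ} (hmn : m ≤ n)
    (hnN : n ≤ N) (c : K) :
    (N - m).descFactorial (n - m) • c / N.descFactorial n = c / N.descFactorial m := by
  have hne : ((N - m).descFactorial (n - m) : K) ≠ 0 :=
    Nat.cast_ne_zero.2 fun h => by rw [Nat.descFactorial_eq_zero_iff_lt] at h; omega
  rw [← Nat.descFactorial_mul_descFactorial hmn, nsmul_eq_mul, Nat.cast_mul,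
    mul_div_mul_left _ _ hne]

theorem srsExp_apply (hnN : n ≤ N) (i : Fin n) (f : Fin N → ℝ) :
    srsExp N n (fun σ => f (σ i)) = (∑ j, f j) / N := by
  rw [srsExp, Fintype.sum_embedding_apply, Fintype.card_embedding_eq]
  simp only [Fintype.card_fin]
  rw [nsmul_div_descFactorial i.pos hnN, Nat.descFactorial_one]

theorem srsExp_apply_apply (hnN : n ≤ N) {i k : Fin n} (hik : i ≠ k)
    (g : Fin N → Fin N → ℝ) :
    srsExp N n (fun σ => g (σ i) (σ k))
      = (∑ j, ∑ l ∈ univ.erase j, g j l) / N.descFactorial 2 := by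
  have hn : 2 ≤ n := by have := Fin.val_ne_of_ne hik; omega
  rw [srsExp, Fintype.sum_embedding_apply_apply hik, Fintype.card_embedding_eq]
  simp only [Fintype.card_fin]
  rw [nsmul_div_descFactorial hn hnN]

end srsExp

theorem srs_expect_SaSb_general (N n a b : ℕ) (hnN : n ≤ N)
    (x : Fin N → ℝ) :
    srsExp N n (fun σ => (∑ i, x (σ i) ^ a) * (∑ i, x (σ i) ^ b))
      = ((n.descFactorial 1 : ℝ) / (N.descFactorial 1)
            - (n.descFactorial 2 : ℝ) / (N.descFactorial 2)) * (∑ j, x j ^ (a + b))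
        + ((n.descFactorial 2 : ℝ) / (N.descFactorial 2))
            * ((∑ j, x j ^ a) * (∑ j, x j ^ b)) := by
  have off_diag : ∑ j, ∑ l ∈ univ.erase j, x j ^ a * x l ^ b
      = (∑ j, x j ^ a) * (∑ j, x j ^ b) - ∑ j, x j ^ (a + b) := by
    simp_rw [← mul_sum, sum_erase_eq_sub (mem_univ _), mul_sub, sum_sub_distrib, sum_mul,
      pow_add]
  have row (i : Fin n) : ∑ k, srsExp N n (fun σ => x (σ i) ^ a * x (σ k) ^ b)
      = (∑ j, x j ^ (a + b)) / N
        + (n - 1 : ℕ) • (((∑ j, x j ^ a) * (∑ j, x j ^ b) - ∑ j, x j ^ (a + b))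
          / N.descFactorial 2) := by
    rw [← add_sum_erase _ _ (mem_univ i), sum_congr rfl fun k hk =>
      srsExp_apply_apply hnN (ne_of_mem_erase hk).symm (fun j l => x j ^ a * x l ^ b)]
    rw [srsExp_apply hnN i (fun j => x j ^ a * x j ^ b), off_diag, sum_const,
      card_erase_of_mem (mem_univ i)]
    simp_rw [pow_add, card_univ, Fintype.card_fin]
  have hn2 : n.descFactorial 2 = n * (n - 1) := by simp [Nat.descFactorial, mul_comm]
  conv_lhs => simp only [sum_mul_sum]
  simp_rw [srsExp_sum, row]
  rw [sum_const, card_univ, Fintype.card_fin, Nat.descFactorial_one, Nat.descFactorial_one, hn2]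
  simp only [nsmul_eq_mul, Nat.cast_mul]
  ring

/-- `E[S_a S_b] = λ(2) s_{a+b} + λ(1²) s_a s_b` with `λ(2) = e₁ - e₂`, `λ(1²) = e₂`,
where `e_j = (n)_j/(N)_j`. -/
theorem srs_expect_SaSb (N n a b : ℕ) (hn : 2 ≤ n) (hnN : n ≤ N)
    (x : Fin N → ℝ) :
    srsExp N n (fun σ => (∑ i, x (σ i) ^ a) * (∑ i, x (σ i) ^ b))
      = ((n.descFactorial 1 : ℝ) / (N.descFactorial 1)
            - (n.descFactorial 2 : ℝ) / (N.descFactorial 2)) * (∑ j, x j ^ (a + b))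
        + ((n.descFactorial 2 : ℝ) / (N.descFactorial 2))
            * ((∑ j, x j ^ a) * (∑ j, x j ^ b)) :=
  srs_expect_SaSb_general N n a b hnN x
end

section
/- For simple random sampling without replacement of size n ≥ 3 from a population of size N ≥ 3, E[S_a S_b S_c] = λ(3) s_{a+b+c} + λ(12)(s_{a+b} s_c + s_{a+c} s_b + s_{b+c} s_a) + λ(1³) s_a s_b s_c, where λ(3) = e_1 − 3e_2 + 2e_3, λ(12) = e_2 − e_3, λ(1³) = e_3, and e_j = (n)_j/(N)_j. -/
/-!
Expanding the product of three sample sums according to which of the three summation indices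
coincide writes it as a sum of sums over injective tuples of sample positions: one sum over
injective triples, three over injective pairs and one over single positions. For a fixed
injective `k`-tuple of positions, composing with the sample is a `(N - k).descFactorial (n - k)`
to one map from samples onto injective `k`-tuples of the population, so each of these sums has
expectation `(n)_k / (N)_k` times the corresponding population sum. Finally, sums over injective
pairs and triples of the population are expressed through power sums by inclusion–exclusion.
-/

open Finset

section EmbeddingSums

variable {X R : Type*} [Fintype X] [DecidableEq X]

omit [DecidableEq X] in
theorem sum_embedding_fin_one [AddCommMonoid R] (f : X → R) :
    ∑ τ : Fin 1 ↪ X, f (τ 0) = ∑ p, f p :=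
  Fintype.sum_equiv Equiv.uniqueEmbeddingEquivResult _ _ fun _ => rfl

theorem sum_embedding_fin_succ [AddCommGroup R] {k : ℕ} (φ : X → (Fin k → X) → R) :
    ∑ τ : Fin (k + 1) ↪ X, φ (τ 0) (τ ∘ Fin.succ)
      = ∑ ρ : Fin k ↪ X, (∑ y, φ y ρ - ∑ i, φ (ρ i) ρ) := by
  classical
  rw [Fintype.sum_equiv (Equiv.embeddingFinSucc k X) (fun τ => φ (τ 0) (τ ∘ Fin.succ))
    (fun p => φ p.2 p.1) fun _ => rfl, Fintype.sum_sigma]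
  refine Fintype.sum_congr _ _ fun ρ => ?_
  have hrange : ∑ y : Set.range ρ, φ y ρ = ∑ i, φ (ρ i) ρ :=
    (Fintype.sum_equiv (Equiv.ofInjective ρ ρ.injective) _ _ fun _ => rfl).symm
  rw [← hrange, eq_sub_iff_add_eq, add_comm]
  convert Fintype.sum_subtype_add_sum_subtype (· ∈ Set.range ρ) (φ · ρ)

variable [CommRing R]

theorem sum_embedding_fin_two (f g : X → R) :
    ∑ τ : Fin 2 ↪ X, f (τ 0) * g (τ 1) = (∑ p, f p) * (∑ p, g p) - ∑ p, f p * g p := by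
  refine (sum_embedding_fin_succ (k := 1) fun y v => f y * g (v 0)).trans ?_
  simp only [Fin.sum_univ_one, ← sum_mul, ← sub_mul]
  rw [sum_embedding_fin_one fun p => ((∑ y, f y) - f p) * g p]
  simp only [sub_mul, sum_sub_distrib, ← mul_sum]

theorem sum_embedding_fin_three (f g h : X → R) :
    ∑ τ : Fin 3 ↪ X, f (τ 0) * g (τ 1) * h (τ 2)
      = (∑ p, f p) * (∑ p, g p) * (∑ p, h p) - (∑ p, f p * g p) * (∑ p, h p)
        - (∑ p, f p * h p) * (∑ p, g p) - (∑ p, g p * h p) * (∑ p, f p)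
        + 2 * ∑ p, f p * g p * h p := by
  refine (sum_embedding_fin_succ (k := 2) fun y v => f y * g (v 0) * h (v 1)).trans ?_
  have hsummand : ∀ ρ : Fin 2 ↪ X,
      ∑ y, f y * g (ρ 0) * h (ρ 1) - ∑ i, f (ρ i) * g (ρ 0) * h (ρ 1)
        = (∑ p, f p) * (g (ρ 0) * h (ρ 1)) - (f (ρ 0) * g (ρ 0)) * h (ρ 1)
          - g (ρ 0) * (f (ρ 1) * h (ρ 1)) := by
    intro ρ
    rw [Fin.sum_univ_two, ← sum_mul, ← sum_mul]
    ring
  simp only [hsummand, sum_sub_distrib, ← mul_sum]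
  rw [sum_embedding_fin_two g h, sum_embedding_fin_two (fun p => f p * g p) h,
    sum_embedding_fin_two g (fun p => f p * h p)]
  have hgfh : ∑ p, g p * (f p * h p) = ∑ p, f p * g p * h p := sum_congr rfl fun _ _ => by ring
  rw [hgfh]
  ring

theorem sum_mul_sum_mul_sum_eq_sum_embedding (f g h : X → R) :
    (∑ p, f p) * (∑ p, g p) * (∑ p, h p)
      = ∑ τ : Fin 3 ↪ X, f (τ 0) * g (τ 1) * h (τ 2)
        + ∑ τ : Fin 2 ↪ X, f (τ 0) * g (τ 0) * h (τ 1)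
        + ∑ τ : Fin 2 ↪ X, f (τ 0) * h (τ 0) * g (τ 1)
        + ∑ τ : Fin 2 ↪ X, g (τ 0) * h (τ 0) * f (τ 1)
        + ∑ τ : Fin 1 ↪ X, f (τ 0) * g (τ 0) * h (τ 0) := by
  rw [sum_embedding_fin_three, sum_embedding_fin_two (fun p => f p * g p) h,
    sum_embedding_fin_two (fun p => f p * h p) g, sum_embedding_fin_two (fun p => g p * h p) f,
    sum_embedding_fin_one fun p => f p * g p * h p]
  have hfhg : ∑ p, f p * h p * g p = ∑ p, f p * g p * h p := sum_congr rfl fun _ _ => by ring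
  have hghf : ∑ p, g p * h p * f p = ∑ p, f p * g p * h p := sum_congr rfl fun _ _ => by ring
  rw [hfhg, hghf]
  ring

end EmbeddingSums

theorem sum_embedding_trans_eq_smul {α β γ M : Type*} [Fintype α] [Fintype β] [Fintype γ]
    [DecidableEq α] [DecidableEq β] [DecidableEq γ] [AddCommMonoid M]
    (ι : α ↪ β) (F : (α ↪ γ) → M) :
    ∑ σ : β ↪ γ, F (ι.trans σ)
      = (Fintype.card γ - Fintype.card α).descFactorial (Fintype.card β - Fintype.card α)
          • ∑ ρ, F ρ := by
  classical
  let κ := ↥(Set.range ι)ᶜ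
  let e : β ≃ α ⊕ κ := (Equiv.Set.sumCompl (Set.range ι)).symm.trans
    (Equiv.sumCongr (Equiv.ofInjective ι ι.injective).symm (Equiv.refl κ))
  have hκ : Fintype.card κ = Fintype.card β - Fintype.card α := by
    rw [Fintype.card_compl_set, Set.card_range_of_injective ι.injective]
  calc ∑ σ : β ↪ γ, F (ι.trans σ)
      = ∑ σ : α ⊕ κ ↪ γ, F (Function.Embedding.inl.trans σ) :=
        Fintype.sum_equiv (e.embeddingCongr (Equiv.refl γ)) _ _ fun _ => by congr 1
    _ = ∑ p : Σ ρ : α ↪ γ, (κ ↪ ↥(Set.range ρ)ᶜ), F p.1 :=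
        Fintype.sum_equiv Equiv.sumEmbeddingEquivSigmaEmbeddingRestricted _ _ fun _ => rfl
    _ = _ := by
      rw [Fintype.sum_sigma, smul_sum]
      refine Fintype.sum_congr _ _ fun ρ => ?_
      dsimp only
      rw [sum_const, card_univ, Fintype.card_embedding_eq, hκ, Fintype.card_compl_set,
        Set.card_range_of_injective ρ.injective]

theorem srsExp_add {N n : ℕ} (f g : (Fin n ↪ Fin N) → ℝ) :
    srsExp N n (fun σ => f σ + g σ) = srsExp N n f + srsExp N n g := by
  simp only [srsExp, sum_add_distrib, add_div]

theorem srsExp_sum_embedding_trans {N n k : ℕ} (hnN : n ≤ N) (F : (Fin k ↪ Fin N) → ℝ) :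
    srsExp N n (fun σ => ∑ τ : Fin k ↪ Fin n, F (τ.trans σ))
      = (n.descFactorial k : ℝ) / N.descFactorial k * ∑ ρ, F ρ := by
  have hsum : ∑ σ : Fin n ↪ Fin N, ∑ τ : Fin k ↪ Fin n, F (τ.trans σ)
      = (n.descFactorial k * (N - k).descFactorial (n - k) : ℕ) • ∑ ρ, F ρ := by
    rw [sum_comm]
    simp only [sum_embedding_trans_eq_smul, Fintype.card_fin, sum_const, card_univ,
      Fintype.card_embedding_eq, smul_smul]
  rw [srsExp, hsum, Fintype.card_embedding_eq, Fintype.card_fin, Fintype.card_fin, nsmul_eq_mul]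
  rcases le_or_gt k n with hk | hk
  · have hNk : (N.descFactorial k : ℝ) ≠ 0 := by
      exact_mod_cast (Nat.descFactorial_pos.mpr (hk.trans hnN)).ne'
    have hrest : ((N - k).descFactorial (n - k) : ℝ) ≠ 0 := by
      exact_mod_cast (Nat.descFactorial_pos.mpr (by omega)).ne'
    rw [← Nat.descFactorial_mul_descFactorial hk]
    push_cast
    field_simp
  · simp [Nat.descFactorial_eq_zero_iff_lt.mpr hk]

theorem srs_expect_SaSbSc_general (N n a b c : ℕ) (hnN : n ≤ N)
    (x : Fin N → ℝ) :
    srsExp N n (fun σ => (∑ i, x (σ i) ^ a) * (∑ i, x (σ i) ^ b) * (∑ i, x (σ i) ^ c))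
      = ((n.descFactorial 1 : ℝ) / (N.descFactorial 1)
            - 3 * ((n.descFactorial 2 : ℝ) / (N.descFactorial 2))
            + 2 * ((n.descFactorial 3 : ℝ) / (N.descFactorial 3)))
          * (∑ j, x j ^ (a + b + c))
        + ((n.descFactorial 2 : ℝ) / (N.descFactorial 2)
            - (n.descFactorial 3 : ℝ) / (N.descFactorial 3))
          * ((∑ j, x j ^ (a + b)) * (∑ j, x j ^ c)
            + (∑ j, x j ^ (a + c)) * (∑ j, x j ^ b)
            + (∑ j, x j ^ (b + c)) * (∑ j, x j ^ a))
        + ((n.descFactorial 3 : ℝ) / (N.descFactorial 3))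
          * ((∑ j, x j ^ a) * (∑ j, x j ^ b) * (∑ j, x j ^ c)) := by
  have hsample := fun σ : Fin n ↪ Fin N => sum_mul_sum_mul_sum_eq_sum_embedding
    (fun i => x (σ i) ^ a) (fun i => x (σ i) ^ b) (fun i => x (σ i) ^ c)
  have avg3 := srsExp_sum_embedding_trans hnN fun ρ : Fin 3 ↪ Fin N =>
    x (ρ 0) ^ a * x (ρ 1) ^ b * x (ρ 2) ^ c
  have avg2 (u v : ℕ) := srsExp_sum_embedding_trans hnN fun ρ : Fin 2 ↪ Fin N =>
    x (ρ 0) ^ u * x (ρ 1) ^ v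
  have avg1 := srsExp_sum_embedding_trans hnN fun ρ : Fin 1 ↪ Fin N => x (ρ 0) ^ (a + b + c)
  simp only [← pow_add] at hsample
  simp only [Function.Embedding.trans_apply] at avg3 avg2 avg1
  simp only [hsample, srsExp_add, avg3, avg2, avg1]
  rw [sum_embedding_fin_three (x · ^ a) (x · ^ b) (x · ^ c),
    sum_embedding_fin_two (x · ^ (a + b)) (x · ^ c),
    sum_embedding_fin_two (x · ^ (a + c)) (x · ^ b),
    sum_embedding_fin_two (x · ^ (b + c)) (x · ^ a), sum_embedding_fin_one (x · ^ (a + b + c))]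
  simp only [← pow_add, add_right_comm a c b, show b + c + a = a + b + c by ring]
  ring

/-- `E[S_a S_b S_c] = λ(3) s_{a+b+c} + λ(12)(s_{a+b}s_c + s_{a+c}s_b + s_{b+c}s_a)
+ λ(1³) s_a s_b s_c` with `λ(3) = e₁ - 3e₂ + 2e₃`, `λ(12) = e₂ - e₃`, `λ(1³) = e₃`. -/
theorem srs_expect_SaSbSc (N n a b c : ℕ) (hn : 3 ≤ n) (hN : 3 ≤ N) (hnN : n ≤ N)
    (x : Fin N → ℝ) :
    srsExp N n (fun σ => (∑ i, x (σ i) ^ a) * (∑ i, x (σ i) ^ b) * (∑ i, x (σ i) ^ c))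
      = ((n.descFactorial 1 : ℝ) / (N.descFactorial 1)
            - 3 * ((n.descFactorial 2 : ℝ) / (N.descFactorial 2))
            + 2 * ((n.descFactorial 3 : ℝ) / (N.descFactorial 3)))
          * (∑ j, x j ^ (a + b + c))
        + ((n.descFactorial 2 : ℝ) / (N.descFactorial 2)
            - (n.descFactorial 3 : ℝ) / (N.descFactorial 3))
          * ((∑ j, x j ^ (a + b)) * (∑ j, x j ^ c)
            + (∑ j, x j ^ (a + c)) * (∑ j, x j ^ b)
            + (∑ j, x j ^ (b + c)) * (∑ j, x j ^ a))
        + ((n.descFactorial 3 : ℝ) / (N.descFactorial 3))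
          * ((∑ j, x j ^ a) * (∑ j, x j ^ b) * (∑ j, x j ^ c)) :=
  srs_expect_SaSbSc_general N n a b c hnN x
end

section
/- The standardized symmetric function is unbiased under sampling without replacement: for distinct exponents configuration π = (π_1,...,π_j) and a simple random sample of size n ≥ j from a population of size N, E[⟨π_1···π_j⟩_n] = ⟨π_1···π_j⟩_N, where ⟨π_1···π_j⟩_m = (1/(m)_j) ∑' y_{i_1}^{π_1}···y_{i_j}^{π_j}, the sum being over j-tuples of distinct indices in {1,...,m}. -/
/-!
For a fixed choice `τ` of `j` positions inside the sample, the map `σ ↦ σ ∘ τ` sends a uniform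
ordered sample `σ` of size `n` to a uniform ordered `j`-tuple of distinct population indices:
it commutes with the action of `Perm (Fin N)`, which is transitive on `j`-tuples, so all its
fibres have the same size. Averaging over `τ` gives the claim.
-/

open Finset

/-- The standardized symmetric function
`⟨π₁⋯π_j⟩_m = (1/(m)_j) ∑'_{i₁,…,i_j distinct} y_{i₁}^{π₁} ⋯ y_{i_j}^{π_j}`. -/
noncomputable def stdSymFn (j m : ℕ) (π : Fin j → ℕ) (y : Fin m → ℝ) : ℝ :=
  (∑ τ : Fin j ↪ Fin m, ∏ k, y (τ k) ^ π k) / (m.descFactorial j)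

namespace MulActionHom

variable {G α β : Type*} [Group G] [MulAction G α] [MulAction G β] [Fintype α]
  [MulAction.IsPretransitive G β]

theorem card_fiber_eq [DecidableEq β] (φ : α →[G] β) (b b' : β) :
    #{a | φ a = b} = #{a | φ a = b'} := by
  obtain ⟨g, rfl⟩ := MulAction.exists_smul_eq G b b'
  refine card_nbij' (g • ·) (g⁻¹ • ·) ?_ ?_ ?_ ?_ <;> intro a ha <;> simp_all

theorem sum_comp_div_card {K : Type*} [Semifield K] [CharZero K] [Fintype β] [Nonempty α]
    (φ : α →[G] β) (f : β → K) :
    (∑ a, f (φ a)) / Fintype.card α = (∑ b, f b) / Fintype.card β := by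
  classical
  obtain ⟨a₀⟩ := ‹Nonempty α›
  set c := #{a | φ a = φ a₀}
  have hfiber (b : β) : #{a | φ a = b} = c := φ.card_fiber_eq b (φ a₀)
  have hc : (c : K) ≠ 0 := Nat.cast_ne_zero.mpr (card_ne_zero_of_mem (a := a₀) (by simp))
  have hsum : ∑ a, f (φ a) = c * ∑ b, f b := by
    rw [← sum_fiberwise univ φ, mul_sum]
    refine sum_congr rfl fun b _ => ?_
    rw [sum_congr rfl fun a ha => by rw [(mem_filter.mp ha).2], sum_const, hfiber, nsmul_eq_mul]
  have hcard : Fintype.card α = c * Fintype.card β := by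
    rw [← card_univ, card_eq_sum_card_fiberwise (t := univ) (f := φ) (by simp)]
    simp [hfiber, mul_comm]
  rw [hsum, hcard, Nat.cast_mul, mul_div_mul_left _ _ hc]

end MulActionHom

def Function.Embedding.precompHom (G : Type*) {α β γ : Type*} [Group G] [MulAction G γ]
    (τ : α ↪ β) : (β ↪ γ) →[G] (α ↪ γ) where
  toFun σ := τ.trans σ
  map_smul' _ _ := rfl

/-- Unbiasedness of the standardized symmetric function under SRSWOR:
`E⟨π₁⋯π_j⟩_n = ⟨π₁⋯π_j⟩_N`. -/
theorem srs_symFn_unbiased (N n j : ℕ) (hj : j ≤ n) (hnN : n ≤ N)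
    (π : Fin j → ℕ) (x : Fin N → ℝ) :
    srsExp N n (fun σ => stdSymFn j n π (fun i => x (σ i))) = stdSymFn j N π x := by
  have htrans : MulAction.IsPretransitive (Equiv.Perm (Fin N)) (Fin j ↪ Fin N) :=
    Equiv.Perm.isMultiplyPretransitive (Fin N) j
  have : Nonempty (Fin n ↪ Fin N) := ⟨Fin.castLEEmb hnN⟩
  have hsample (τ : Fin j ↪ Fin n) :
      (∑ σ : Fin n ↪ Fin N, ∏ k, x (σ (τ k)) ^ π k) / Fintype.card (Fin n ↪ Fin N) =
        stdSymFn j N π x := by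
    have := (τ.precompHom (Equiv.Perm (Fin N))).sum_comp_div_card
      (fun ρ : Fin j ↪ Fin N => ∏ k, x (ρ k) ^ π k)
    rwa [Fintype.card_embedding_eq (α := Fin j), Fintype.card_fin, Fintype.card_fin] at this
  have hnj : (n.descFactorial j : ℝ) ≠ 0 := by
    exact_mod_cast (Nat.descFactorial_pos.mpr hj).ne'
  calc srsExp N n (fun σ => stdSymFn j n π (fun i => x (σ i)))
      = ∑ τ : Fin j ↪ Fin n, (∑ σ : Fin n ↪ Fin N, ∏ k, x (σ (τ k)) ^ π k) /
          Fintype.card (Fin n ↪ Fin N) / n.descFactorial j := by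
        simp only [srsExp, stdSymFn, ← sum_div]
        rw [sum_comm, div_right_comm]
    _ = stdSymFn j N π x := by
        simp only [hsample]
        rw [sum_const, card_univ, Fintype.card_embedding_eq, Fintype.card_fin, Fintype.card_fin,
          nsmul_eq_mul]
        field_simp
end
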